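/- Let J be an adapted complex structure on a finite simple graph G. If a is a distinguished edge of G and Ja ∈ E, then Ja is also a distinguished edge. -/

import Mathlib

/-!  Framework: the 2-step nilpotent Lie algebra `𝔫_G` associated to a finite simple
graph `G` (Dani–Mainkar construction), and adapted complex structures on it. -/

open scoped BigOperators

namespace GraphLie

variable {V : Type*} [Fintype V] [LinearOrder V]

/-- The underlying real vector space of the Lie algebra `𝔫_G` associated to a graph `G`:
real-valued functions on its basis `V ⊕ G.edgeSet` (vertices and edges). -/
abbrev Niln (G : SimpleGraph V) : Type _ := (V ⊕ G.edgeSet) → ℝ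

variable (G : SimpleGraph V) [DecidableRel G.Adj]

/-- The basis vector of `𝔫_G` corresponding to the vertex `v`. -/
noncomputable def vtx (v : V) : Niln G := Pi.single (Sum.inl v) 1

/-- The basis vector of `𝔫_G` corresponding to the edge `e`. -/
noncomputable def edg (e : G.edgeSet) : Niln G := Pi.single (Sum.inr e) 1

/-- The basis vector of `𝔫_G` corresponding to a vertex or an edge. -/
noncomputable def basisVec (b : V ⊕ G.edgeSet) : Niln G := Pi.single b 1

/-- The bracket of two vertex generators: for adjacent vertices `i < j` (with respect to
the chosen labeling of the vertices) `[v_i, v_j] = e_{i,j}` and `[v_j, v_i] = -e_{i,j}`;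
non-adjacent vertices commute. -/
noncomputable def bracketVtx (i j : V) : Niln G :=
  if h : G.Adj i j then
    (if i < j then edg G ⟨s(i, j), G.mem_edgeSet.mpr h⟩
     else - edg G ⟨s(i, j), G.mem_edgeSet.mpr h⟩)
  else 0

/-- The Lie bracket of `𝔫_G`, extended bilinearly from the generators; all the
edge generators are central. -/
noncomputable def bracket (x y : Niln G) : Niln G :=
  ∑ i : V, ∑ j : V, (x (Sum.inl i) * y (Sum.inl j)) • bracketVtx G i j

/-- An adapted complex structure on the graph `G`: a linear endomorphism `J` of `𝔫_G`
with `J ∘ J = -id`, whose Nijenhuis tensor vanishes, and which sends each basis vector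
(vertex or edge) to plus or minus a basis vector. -/
structure AdaptedCS : Type _ where
  J : Niln G →ₗ[ℝ] Niln G
  j_squared : ∀ x, J (J x) = -x
  integrable : ∀ x y,
    bracket G x y + J (bracket G (J x) y + bracket G x (J y)) - bracket G (J x) (J y) = 0
  adapted : ∀ b : V ⊕ G.edgeSet,
    (∃ b', J (basisVec G b) = basisVec G b') ∨ (∃ b', J (basisVec G b) = - basisVec G b')

variable {G}

/-- An edge of `G` joining vertices `v` and `w` is distinguished if `Jv = w` or `Jw = v`. -/
def AdaptedCS.Distinguished (Jc : AdaptedCS G) (e : G.edgeSet) : Prop :=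
  ∃ v w : V, (e : Sym2 V) = s(v, w) ∧
    (Jc.J (vtx G v) = vtx G w ∨ Jc.J (vtx G w) = vtx G v)

end GraphLie

/-!
Write `b = {p, q}` and let `J` swap the endpoints of `a = {v, w}` up to sign. Applying `J` to
the vanishing Nijenhuis tensor gives `J[p,q] = [Jp,q] + [p,Jq] + J[Jp,Jq]`, whose left side is
`±Jb = ∓a`. Since `J` permutes the basis up to sign and preserves the span of `v, w`, the vertex
`Jp` can only bracket with `q` to a multiple of `a` if `p = q`; so the `a`-component comes from
`J[Jp,Jq]` alone, which forces `[Jp,Jq]` to be a multiple of `J⁻¹a = ±b`, i.e. `Jp = ±q`.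
-/

namespace GraphLie

section

variable {V : Type*} [LinearOrder V] {G : SimpleGraph V}

lemma basisVec_inl (v : V) : basisVec G (Sum.inl v) = vtx G v := rfl

lemma basisVec_inr (e : G.edgeSet) : basisVec G (Sum.inr e) = edg G e := rfl

@[simp]
lemma edg_apply_inl (e : G.edgeSet) (u : V) : edg G e (Sum.inl u) = 0 := by
  simp [edg]

@[simp]
lemma edg_apply_inr_self (e : G.edgeSet) : edg G e (Sum.inr e) = 1 := by
  simp [edg]

lemma eq_of_smul_basisVec_eq {c c' : ℝ} {β γ : V ⊕ G.edgeSet} (hc : c ≠ 0)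
    (h : c • basisVec G β = c' • basisVec G γ) : β = γ := by
  by_contra hne
  have := congrFun h β
  simp [basisVec, hne] at this
  exact hc this

variable [DecidableRel G.Adj]

lemma bracketVtx_apply_inr_of_ne {i j : V} {e : G.edgeSet} (h : (e : Sym2 V) ≠ s(i, j)) :
    bracketVtx G i j (Sum.inr e) = 0 := by
  have hne : ∀ he : s(i, j) ∈ G.edgeSet, e ≠ ⟨s(i, j), he⟩ := fun _ hh => h (congrArg _ hh)
  unfold bracketVtx
  split_ifs <;> simp [edg, hne]

lemma bracketVtx_of_not_adj {i j : V} (h : ¬ G.Adj i j) : bracketVtx G i j = 0 :=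
  dif_neg h

lemma exists_bracketVtx_eq_smul_edg {i j : V} {e : G.edgeSet} (he : (e : Sym2 V) = s(i, j)) :
    ∃ δ : ℝ, (δ = 1 ∨ δ = -1) ∧ bracketVtx G i j = δ • edg G e := by
  have hadj : G.Adj i j := G.mem_edgeSet.mp (he ▸ e.2)
  obtain rfl : e = ⟨s(i, j), G.mem_edgeSet.mpr hadj⟩ := Subtype.ext he
  unfold bracketVtx
  rw [dif_pos hadj]
  split_ifs
  · exact ⟨1, .inl rfl, (one_smul _ _).symm⟩
  · exact ⟨-1, .inr rfl, (neg_one_smul _ _).symm⟩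

lemma bracketVtx_swap (i j : V) : bracketVtx G j i = -bracketVtx G i j := by
  by_cases hadj : G.Adj i j
  · have hij : i ≠ j := hadj.ne
    have hsym : (⟨s(j, i), G.mem_edgeSet.mpr hadj.symm⟩ : G.edgeSet) =
        ⟨s(i, j), G.mem_edgeSet.mpr hadj⟩ := Subtype.ext Sym2.eq_swap
    unfold bracketVtx
    rw [dif_pos hadj, dif_pos hadj.symm, hsym]
    rcases hij.lt_or_gt with h | h <;> simp [h, h.not_gt]
  · rw [bracketVtx_of_not_adj hadj, bracketVtx_of_not_adj (mt G.adj_symm hadj), neg_zero]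

variable [Fintype V]

lemma bracket_swap (x y : Niln G) : bracket G y x = -bracket G x y := by
  unfold bracket
  rw [Finset.sum_comm, ← Finset.sum_neg_distrib]
  refine Finset.sum_congr rfl fun i _ => ?_
  rw [← Finset.sum_neg_distrib]
  refine Finset.sum_congr rfl fun j _ => ?_
  rw [bracketVtx_swap, smul_neg, mul_comm]

lemma bracket_vtx_vtx (i j : V) : bracket G (vtx G i) (vtx G j) = bracketVtx G i j := by
  simp [bracket, vtx, Pi.single_apply]

lemma bracket_edg_left (e : G.edgeSet) (y : Niln G) : bracket G (edg G e) y = 0 := by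
  simp [bracket]

lemma bracket_edg_right (x : Niln G) (e : G.edgeSet) : bracket G x (edg G e) = 0 := by
  simp [bracket]

lemma bracket_smul_left (c : ℝ) (x y : Niln G) : bracket G (c • x) y = c • bracket G x y := by
  simp only [bracket, Pi.smul_apply, smul_eq_mul, Finset.smul_sum, smul_smul, mul_assoc]

lemma bracket_smul_right (c : ℝ) (x y : Niln G) : bracket G x (c • y) = c • bracket G x y := by
  simp only [bracket, Pi.smul_apply, smul_eq_mul, Finset.smul_sum, smul_smul, mul_left_comm]

namespace AdaptedCS

variable (Jc : AdaptedCS G)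

lemma exists_J_basisVec (β : V ⊕ G.edgeSet) :
    ∃ c : ℝ, ∃ γ, (c = 1 ∨ c = -1) ∧ Jc.J (basisVec G β) = c • basisVec G γ := by
  rcases Jc.adapted β with ⟨γ, h⟩ | ⟨γ, h⟩
  · exact ⟨1, γ, .inl rfl, by rw [h, one_smul]⟩
  · exact ⟨-1, γ, .inr rfl, by rw [h, neg_one_smul]⟩

lemma J_basisVec_ne_smul_self (β : V ⊕ G.edgeSet) (c : ℝ) :
    Jc.J (basisVec G β) ≠ c • basisVec G β := by
  intro h
  have h2 := Jc.j_squared (basisVec G β)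
  rw [h, map_smul, h, smul_smul] at h2
  have := congrFun h2 β
  simp [basisVec] at this
  nlinarith [sq_nonneg c]

/-- `J` permutes the basis up to sign. -/
lemma eq_of_J_basisVec_eq_smul {β β' γ : V ⊕ G.edgeSet} {c c' : ℝ} (hc' : c' ≠ 0)
    (h : Jc.J (basisVec G β) = c • basisVec G γ) (h' : Jc.J (basisVec G β') = c' • basisVec G γ) :
    β = β' := by
  have hJγ : ∀ {β₀ : V ⊕ G.edgeSet} {c₀ : ℝ}, Jc.J (basisVec G β₀) = c₀ • basisVec G γ →
      -basisVec G β₀ = c₀ • Jc.J (basisVec G γ) := fun h₀ => by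
    rw [← Jc.j_squared, h₀, map_smul]
  refine eq_of_smul_basisVec_eq (c := c') (c' := c) hc' ?_
  rw [← neg_inj, ← smul_neg, ← smul_neg, hJγ h, hJγ h', smul_smul, smul_smul, mul_comm]

lemma J_bracket (x y : Niln G) :
    Jc.J (bracket G x y) =
      bracket G (Jc.J x) y + bracket G x (Jc.J y) + Jc.J (bracket G (Jc.J x) (Jc.J y)) := by
  have h := congrArg Jc.J (Jc.integrable x y)
  rw [map_sub, map_add, Jc.j_squared, map_zero] at h
  rw [← sub_eq_zero, ← h]
  abel

variable {Jc} {a : G.edgeSet} {v w : V}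

lemma bracket_J_vtx_vtx_apply_eq_zero (hav : (a : Sym2 V) = s(v, w))
    (hJv : Jc.J (vtx G v) = vtx G w) {p q : V} (hpq : p ≠ q) :
    bracket G (Jc.J (vtx G p)) (vtx G q) (Sum.inr a) = 0 := by
  obtain ⟨c, γ, -, hJp⟩ := Jc.exists_J_basisVec (.inl p)
  rw [basisVec_inl] at hJp
  rw [hJp, bracket_smul_left]
  rcases γ with s | e
  · by_cases has : (a : Sym2 V) = s(s, q)
    · have hJw : Jc.J (vtx G w) = (-1 : ℝ) • vtx G v := by
        rw [← hJv, Jc.j_squared, neg_one_smul]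
      rcases Sym2.eq_iff.mp (has.symm.trans hav) with ⟨rfl, rfl⟩ | ⟨rfl, rfl⟩
      · exact absurd (Jc.eq_of_J_basisVec_eq_smul (by norm_num) hJp hJw) (by simpa using hpq)
      · exact absurd (Jc.eq_of_J_basisVec_eq_smul one_ne_zero hJp (by rwa [one_smul]))
          (by simpa using hpq)
    · simp [basisVec_inl, bracket_vtx_vtx, bracketVtx_apply_inr_of_ne has]
  · simp [basisVec_inr, bracket_edg_left]

lemma exists_J_vtx_eq_smul_vtx {b : G.edgeSet} (hb : Jc.J (edg G a) = edg G b) {p q : V}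
    (hbpq : (b : Sym2 V) = s(p, q))
    (h : Jc.J (bracket G (Jc.J (vtx G p)) (Jc.J (vtx G q))) (Sum.inr a) ≠ 0) :
    ∃ c : ℝ, (c = 1 ∨ c = -1) ∧ Jc.J (vtx G p) = c • vtx G q := by
  obtain ⟨c, γ, hc, hJp⟩ := Jc.exists_J_basisVec (.inl p)
  obtain ⟨d, γ', -, hJq⟩ := Jc.exists_J_basisVec (.inl q)
  rw [basisVec_inl] at hJp hJq
  rw [hJp, hJq, bracket_smul_left, bracket_smul_right] at h
  rcases γ with s | e; swap
  · simp [basisVec_inr, bracket_edg_left] at h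
  rcases γ' with t | e; swap
  · simp [basisVec_inr, bracket_edg_right] at h
  rw [basisVec_inl, basisVec_inl, bracket_vtx_vtx] at h
  by_cases hst : G.Adj s t; swap
  · simp [bracketVtx_of_not_adj hst] at h
  set e : G.edgeSet := ⟨s(s, t), G.mem_edgeSet.mpr hst⟩
  obtain ⟨η, -, hη⟩ := exists_bracketVtx_eq_smul_edg (e := e) rfl
  obtain ⟨k, γ'', -, hJe⟩ := Jc.exists_J_basisVec (.inr e)
  rw [hη, map_smul, map_smul, map_smul, ← basisVec_inr, hJe] at h
  obtain rfl : γ'' = .inr a := by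
    by_contra hne
    simp [basisVec, Ne.symm hne] at h
  have hJb : Jc.J (basisVec G (.inr b)) = (-1 : ℝ) • basisVec G (.inr a) := by
    rw [basisVec_inr, ← hb, Jc.j_squared, neg_one_smul, basisVec_inr]
  have heb : e = b := Sum.inr_injective (Jc.eq_of_J_basisVec_eq_smul (by norm_num) hJe hJb)
  rcases Sym2.eq_iff.mp ((congrArg Subtype.val heb).trans hbpq) with ⟨rfl, rfl⟩ | ⟨rfl, rfl⟩
  · exact absurd hJp (Jc.J_basisVec_ne_smul_self (.inl s) c)
  · exact ⟨c, hc, hJp⟩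

lemma distinguished_of_J_vtx_eq_vtx (hav : (a : Sym2 V) = s(v, w))
    (hJv : Jc.J (vtx G v) = vtx G w) {b : G.edgeSet} (hb : Jc.J (edg G a) = edg G b) :
    Jc.Distinguished b := by
  obtain ⟨p, q, hbpq⟩ : ∃ p q : V, (b : Sym2 V) = s(p, q) :=
    Sym2.inductionOn (b : Sym2 V) fun p q => ⟨p, q, rfl⟩
  have hpq : p ≠ q := (G.mem_edgeSet.mp (hbpq ▸ b.2)).ne
  obtain ⟨δ, hδ, hbracket⟩ := exists_bracketVtx_eq_smul_edg hbpq
  have hJb : Jc.J (edg G b) = -edg G a := by rw [← hb, Jc.j_squared]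
  have key := congrFun (Jc.J_bracket (vtx G p) (vtx G q)) (Sum.inr a)
  rw [Pi.add_apply, Pi.add_apply, bracket_J_vtx_vtx_apply_eq_zero hav hJv hpq,
    bracket_swap (Jc.J (vtx G q)),
    Pi.neg_apply, bracket_J_vtx_vtx_apply_eq_zero hav hJv hpq.symm, bracket_vtx_vtx, hbracket,
    map_smul, hJb, neg_zero, add_zero, zero_add] at key
  obtain ⟨c, hc, hJp⟩ := exists_J_vtx_eq_smul_vtx hb hbpq (by
    rw [← key]
    rcases hδ with rfl | rfl <;> simp)
  rcases hc with rfl | rfl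
  · exact ⟨p, q, hbpq, .inl (by rw [hJp, one_smul])⟩
  · refine ⟨p, q, hbpq, .inr ?_⟩
    rw [← neg_neg (vtx G q), ← neg_one_smul ℝ (vtx G q), ← hJp, map_neg, Jc.j_squared, neg_neg]

end AdaptedCS

end

variable {V : Type*} [Fintype V] [LinearOrder V] {G : SimpleGraph V} [DecidableRel G.Adj]

/-- If `a` is a distinguished edge of `G` and `Ja ∈ E`, then `Ja` is
also a distinguished edge. -/
theorem statement2 (Jc : AdaptedCS G) (a b : G.edgeSet)
    (ha : Jc.Distinguished a) (hb : Jc.J (edg G a) = edg G b) :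
    Jc.Distinguished b := by
  obtain ⟨v, w, hav, hJ | hJ⟩ := ha
  · exact AdaptedCS.distinguished_of_J_vtx_eq_vtx hav hJ hb
  · exact AdaptedCS.distinguished_of_J_vtx_eq_vtx (hav.trans Sym2.eq_swap) hJ hb

end GraphLie
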